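/- arXiv:0909.0083 — 2 statements merged into one kernel-verified Lean document; each statement's English description precedes it below -/
import Mathlib

section
/- Suppose an M×N real matrix Φ satisfies the RIP of order K with isometry constant δ, and let Λ ⊂ {1,…,N} with |Λ| < K. Then (1 − δ/(1−δ))‖u‖₂² ≤ ‖A_Λ u‖₂² ≤ (1+δ)‖u‖₂² for all u ∈ ℝ^N such that ‖u‖₀ ≤ K − |Λ| and supp(u) ∩ Λ = ∅. -/
noncomputable section

namespace OMP

open Matrix Finset

/-- The support of a vector, as a `Finset`. -/
def supp {n : ℕ} (x : Fin n → ℝ) : Finset (Fin n) :=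
  Finset.univ.filter fun j => x j ≠ 0

/-- The Euclidean (ℓ²) norm of a vector. -/
def l2 {n : ℕ} (x : Fin n → ℝ) : ℝ := Real.sqrt (∑ j, x j ^ 2)

/-- The ℓ^∞ norm of a vector. -/
def linf {n : ℕ} (x : Fin n → ℝ) : ℝ := ⨆ j, |x j|

/-- The standard inner product of two vectors. -/
def dotp {n : ℕ} (x y : Fin n → ℝ) : ℝ := ∑ j, x j * y j

/-- The restriction of a vector to a set of indices (zero elsewhere). -/
def restr {n : ℕ} (Γ : Finset (Fin n)) (x : Fin n → ℝ) : Fin n → ℝ :=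
  fun j => if j ∈ Γ then x j else 0

/-- The restricted isometry property of order `K` with isometry constant `δ`. -/
def RIP {M N : ℕ} (K : ℕ) (Φ : Matrix (Fin M) (Fin N) ℝ) (δ : ℝ) : Prop :=
  0 < δ ∧ δ < 1 ∧ ∀ x : Fin N → ℝ, (supp x).card ≤ K →
    (1 - δ) * l2 x ^ 2 ≤ l2 (Φ.mulVec x) ^ 2 ∧
      l2 (Φ.mulVec x) ^ 2 ≤ (1 + δ) * l2 x ^ 2

/-- The span of the columns of `Φ` indexed by `Λ`, as a submodule of Euclidean space. -/
def colSpan {M N : ℕ} (Φ : Matrix (Fin M) (Fin N) ℝ) (Λ : Finset (Fin N)) :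
    Submodule ℝ (EuclideanSpace ℝ (Fin M)) :=
  Submodule.span ℝ ((fun j => (WithLp.equiv 2 (Fin M → ℝ)).symm fun i => Φ i j) '' (Λ : Set (Fin N)))

/-- Orthogonal projection `P_Λ` onto the span of the columns of `Φ` indexed by `Λ`. -/
def projCol {M N : ℕ} (Φ : Matrix (Fin M) (Fin N) ℝ) (Λ : Finset (Fin N))
    (v : Fin M → ℝ) : Fin M → ℝ :=
  WithLp.equiv 2 (Fin M → ℝ)
    (Submodule.orthogonalProjection (colSpan Φ Λ) ((WithLp.equiv 2 (Fin M → ℝ)).symm v) : EuclideanSpace ℝ (Fin M))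

/-- The matrix `A_Λ = (I - P_Λ) Φ`: the columns of `Φ` orthogonalized against `colSpan Φ Λ`. -/
def Amat {M N : ℕ} (Φ : Matrix (Fin M) (Fin N) ℝ) (Λ : Finset (Fin N)) :
    Matrix (Fin M) (Fin N) ℝ :=
  Matrix.of fun i j => Φ i j - projCol Φ Λ (fun i' => Φ i' j) i

/-! The vector `P_Λ Φ u` lies in the span of the columns indexed by `Λ`, so it is `Φ w` for some
`w` supported on `Λ`, and `A_Λ u = Φ (u - w)`. As `u` and `w` have disjoint supports, `u - w` is
`K`-sparse with `‖u - w‖ ≥ ‖u‖`, and the RIP gives the lower bound with the better constant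
`1 - δ`. The upper bound holds because `I - P_Λ` is an orthogonal projection, hence a contraction. -/

lemma l2_eq_norm_toLp {n : ℕ} (x : Fin n → ℝ) : l2 x = ‖WithLp.toLp 2 x‖ := by
  simp [l2, EuclideanSpace.norm_eq]

lemma l2_le_l2_sub_of_disjoint {n : ℕ} {x y : Fin n → ℝ} (h : Disjoint (supp x) (supp y)) :
    l2 x ≤ l2 (x - y) := by
  refine Real.sqrt_le_sqrt (Finset.sum_le_sum fun j _ => ?_)
  by_cases hx : x j = 0
  · simp [hx, sq_nonneg]
  · have hy : y j = 0 := by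
      by_contra hy
      exact Finset.disjoint_left.1 h (by simpa [supp] : j ∈ supp x) (by simpa [supp] : j ∈ supp y)
    simp [hy]

lemma supp_sub_subset {n : ℕ} (x y : Fin n → ℝ) : supp (x - y) ⊆ supp x ∪ supp y := by
  intro j
  simp only [supp, Finset.mem_union, Finset.mem_filter, Finset.mem_univ, true_and, Pi.sub_apply]
  contrapose!
  rintro ⟨hx, hy⟩
  simp [hx, hy]

lemma supp_restr_subset {n : ℕ} (Γ : Finset (Fin n)) (x : Fin n → ℝ) : supp (restr Γ x) ⊆ Γ := by
  intro j hj
  by_contra hjΓ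
  simp [supp, restr, hjΓ] at hj

lemma mulVec_restr {M N : ℕ} (Φ : Matrix (Fin M) (Fin N) ℝ) (Γ : Finset (Fin N)) (x : Fin N → ℝ) :
    Φ *ᵥ restr Γ x = ∑ j ∈ Γ, x j • fun i => Φ i j := by
  ext i
  simp [mulVec, dotProduct, restr, Finset.sum_apply, mul_comm]

lemma exists_mulVec_restr_eq_of_mem_colSpan {M N : ℕ} {Φ : Matrix (Fin M) (Fin N) ℝ}
    {Λ : Finset (Fin N)} {p : EuclideanSpace ℝ (Fin M)} (hp : p ∈ colSpan Φ Λ) :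
    ∃ c : Fin N → ℝ, Φ *ᵥ restr Λ c = p.ofLp := by
  obtain ⟨c, hc⟩ := (Submodule.mem_span_image_finset_iff_exists_fun' ℝ).1 hp
  refine ⟨c, ?_⟩
  rw [mulVec_restr, ← hc]
  simp

lemma mulVec_of_map_col {R m n k : Type*} [CommSemiring R] [Fintype n]
    (f : (m → R) →ₗ[R] (k → R)) (A : Matrix m n R) (u : n → R) :
    (of fun i j => f (fun i' => A i' j) i) *ᵥ u = f (A *ᵥ u) := by
  have hA : A *ᵥ u = ∑ j, u j • fun i => A i j := by
    ext i
    simp [mulVec, dotProduct, Finset.sum_apply, mul_comm]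
  ext i
  simp [hA, mulVec, dotProduct, Finset.sum_apply, mul_comm]

lemma Amat_mulVec {M N : ℕ} (Φ : Matrix (Fin M) (Fin N) ℝ) (Λ : Finset (Fin N)) (u : Fin N → ℝ) :
    Amat Φ Λ *ᵥ u = Φ *ᵥ u - projCol Φ Λ (Φ *ᵥ u) := by
  let P : (Fin M → ℝ) →ₗ[ℝ] (Fin M → ℝ) :=
    (WithLp.linearEquiv 2 ℝ (Fin M → ℝ)).toLinearMap ∘ₗ
      (colSpan Φ Λ).starProjection.toLinearMap ∘ₗ (WithLp.linearEquiv 2 ℝ (Fin M → ℝ)).symm.toLinearMap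
  have hA : Amat Φ Λ = Φ - of fun i j => P (fun i' => Φ i' j) i := rfl
  rw [hA, sub_mulVec, mulVec_of_map_col]
  rfl

lemma toLp_Amat_mulVec {M N : ℕ} (Φ : Matrix (Fin M) (Fin N) ℝ) (Λ : Finset (Fin N))
    (u : Fin N → ℝ) :
    WithLp.toLp 2 (Amat Φ Λ *ᵥ u) = (colSpan Φ Λ)ᗮ.starProjection (WithLp.toLp 2 (Φ *ᵥ u)) := by
  rw [Submodule.starProjection_orthogonal_val, Amat_mulVec]
  rfl

lemma l2_Amat_mulVec_le {M N : ℕ} (Φ : Matrix (Fin M) (Fin N) ℝ) (Λ : Finset (Fin N))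
    (u : Fin N → ℝ) : l2 (Amat Φ Λ *ᵥ u) ≤ l2 (Φ *ᵥ u) := by
  rw [l2_eq_norm_toLp, l2_eq_norm_toLp, toLp_Amat_mulVec]
  exact Submodule.norm_starProjection_apply_le _ _

lemma exists_Amat_mulVec_eq_mulVec_sub_restr {M N : ℕ} (Φ : Matrix (Fin M) (Fin N) ℝ)
    (Λ : Finset (Fin N)) (u : Fin N → ℝ) :
    ∃ c : Fin N → ℝ, Amat Φ Λ *ᵥ u = Φ *ᵥ (u - restr Λ c) := by
  obtain ⟨c, hc⟩ := exists_mulVec_restr_eq_of_mem_colSpan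
    ((colSpan Φ Λ).starProjection_apply_mem (WithLp.toLp 2 (Φ *ᵥ u)))
  refine ⟨c, ?_⟩
  rw [Amat_mulVec, mulVec_sub, hc]
  rfl

/-- `A_Λ` satisfies a modified RIP. -/
theorem stmt1 {M N K : ℕ} (Φ : Matrix (Fin M) (Fin N) ℝ) (δ : ℝ) (Λ : Finset (Fin N))
    (hRIP : RIP K Φ δ) (hΛ : Λ.card < K) :
    ∀ u : Fin N → ℝ, (supp u).card ≤ K - Λ.card → supp u ∩ Λ = ∅ →
      (1 - δ / (1 - δ)) * l2 u ^ 2 ≤ l2 ((Amat Φ Λ).mulVec u) ^ 2 ∧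
        l2 ((Amat Φ Λ).mulVec u) ^ 2 ≤ (1 + δ) * l2 u ^ 2 := by
  intro u hcard hdisj
  obtain ⟨-, hδ1, hrip⟩ := hRIP
  obtain ⟨c, hAu⟩ := exists_Amat_mulVec_eq_mulVec_sub_restr Φ Λ u
  have hsupp : Disjoint (supp u) (supp (restr Λ c)) :=
    (Finset.disjoint_iff_inter_eq_empty.2 hdisj).mono_right (supp_restr_subset Λ c)
  have hcard' : (supp (u - restr Λ c)).card ≤ K := calc
    _ ≤ (supp u ∪ supp (restr Λ c)).card := Finset.card_le_card (supp_sub_subset _ _)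
    _ ≤ (supp u).card + Λ.card :=
      (Finset.card_union_le _ _).trans (by grw [supp_restr_subset Λ c])
    _ ≤ K := by omega
  have hδ : δ ≤ δ / (1 - δ) := by
    rw [le_div_iff₀ (by linarith)]
    nlinarith [sq_nonneg δ]
  constructor
  · calc (1 - δ / (1 - δ)) * l2 u ^ 2 ≤ (1 - δ) * l2 u ^ 2 := by gcongr
      _ ≤ (1 - δ) * l2 (u - restr Λ c) ^ 2 := by
        gcongr
        · exact Real.sqrt_nonneg _
        · exact l2_le_l2_sub_of_disjoint hsupp
      _ ≤ l2 (Amat Φ Λ *ᵥ u) ^ 2 := hAu ▸ (hrip _ hcard').1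
  · calc l2 (Amat Φ Λ *ᵥ u) ^ 2 ≤ l2 (Φ *ᵥ u) ^ 2 := by
          gcongr
          · exact Real.sqrt_nonneg _
          · exact l2_Amat_mulVec_le Φ Λ u
      _ ≤ (1 + δ) * l2 u ^ 2 := (hrip u (hcard.trans (Nat.sub_le _ _))).2

end OMP
end
end

section
/- Let h ∈ ℝ^N, let Ω₀ ⊆ {1,…,N} be a regularized set, meaning |h(i)| ≤ 2|h(j)| for all i, j ∈ Ω₀, and let T ⊆ Ω₀ with |T| > |Ω₀|/2. Then ‖h|_T‖₂ ≥ (1/√5)‖h|_{Ω₀}‖₂. -/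
/-!
Squares on a regularized set differ by a factor of at most 4, and the complement `Ω₀ \ T` has no
more elements than `T`, so averaging over pairs gives `∑_{Ω₀ \ T} h² ≤ 4 ∑_T h²`, hence
`‖h|_{Ω₀}‖² ≤ 5 ‖h|_T‖²`.
-/
noncomputable section

namespace OMP

open Matrix Finset

theorem sum_le_mul_sum_of_card_le {ι 𝕜 : Type*} [Field 𝕜] [LinearOrder 𝕜]
    [IsStrictOrderedRing 𝕜] {s t : Finset ι} {a : ι → 𝕜} {c : 𝕜} (hc : 0 ≤ c)
    (ht : ∀ j ∈ t, 0 ≤ a j) (hst : s.card ≤ t.card) (hle : ∀ i ∈ s, ∀ j ∈ t, a i ≤ c * a j) :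
    ∑ i ∈ s, a i ≤ c * ∑ j ∈ t, a j := by
  rcases t.eq_empty_or_nonempty with rfl | htne
  · simp [Finset.card_eq_zero.mp (Nat.le_zero.mp hst)]
  have hsum : 0 ≤ c * ∑ j ∈ t, a j := mul_nonneg hc (Finset.sum_nonneg ht)
  refine le_of_mul_le_mul_left ?_ (Nat.cast_pos.mpr htne.card_pos)
  calc (t.card : 𝕜) * ∑ i ∈ s, a i = ∑ i ∈ s, ∑ _j ∈ t, a i := by
        simp [Finset.mul_sum]
    _ ≤ ∑ _i ∈ s, ∑ j ∈ t, c * a j := Finset.sum_le_sum fun i hi =>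
        Finset.sum_le_sum fun j hj => hle i hi j hj
    _ = s.card * (c * ∑ j ∈ t, a j) := by simp [Finset.mul_sum]
    _ ≤ t.card * (c * ∑ j ∈ t, a j) := by gcongr

lemma l2_restr {n : ℕ} (Γ : Finset (Fin n)) (x : Fin n → ℝ) :
    l2 (restr Γ x) = √(∑ j ∈ Γ, x j ^ 2) := by
  simp [l2, restr, ite_pow, Finset.sum_ite_mem]

theorem sum_sq_le_of_abs_le_mul_abs {ι : Type*} [DecidableEq ι] {x : ι → ℝ} {Ω T : Finset ι}
    {r : ℝ} (hreg : ∀ i ∈ Ω, ∀ j ∈ Ω, |x i| ≤ r * |x j|) (hT : T ⊆ Ω)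
    (hcard : Ω.card ≤ 2 * T.card) :
    ∑ j ∈ Ω, x j ^ 2 ≤ (1 + r ^ 2) * ∑ j ∈ T, x j ^ 2 := by
  have hrest : ∑ j ∈ Ω \ T, x j ^ 2 ≤ r ^ 2 * ∑ j ∈ T, x j ^ 2 := by
    refine sum_le_mul_sum_of_card_le (sq_nonneg r) (fun j _ => sq_nonneg _) ?_ ?_
    · rw [Finset.card_sdiff_of_subset hT]; omega
    · intro i hi j hj
      rw [← sq_abs (x i), ← sq_abs (x j), ← mul_pow]
      exact pow_le_pow_left₀ (abs_nonneg _) (hreg i (Finset.sdiff_subset hi) j (hT hj)) 2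
  rw [← Finset.sum_sdiff hT]
  linarith

/-- a majority subset of a regularized set carries at least a `1/√5`
fraction of its energy. -/
theorem stmt12 {N : ℕ} (h : Fin N → ℝ) (Ω₀ T : Finset (Fin N))
    (hreg : ∀ i ∈ Ω₀, ∀ j ∈ Ω₀, |h i| ≤ 2 * |h j|)
    (hT : T ⊆ Ω₀) (hcard : (Ω₀.card : ℝ) / 2 < (T.card : ℝ)) :
    (1 / Real.sqrt 5) * l2 (restr Ω₀ h) ≤ l2 (restr T h) := by
  have hmajor : Ω₀.card ≤ 2 * T.card := by
    exact_mod_cast (by linarith : (Ω₀.card : ℝ) ≤ 2 * T.card)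
  have henergy := sum_sq_le_of_abs_le_mul_abs hreg hT hmajor
  rw [one_div_mul_eq_div, div_le_iff₀ (by positivity), l2_restr, l2_restr, mul_comm,
    ← Real.sqrt_mul (by positivity)]
  exact Real.sqrt_le_sqrt (by linarith)

end OMP
end
end
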